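/- arXiv:2510.14298 — 3 statements merged into one kernel-verified Lean document; each statement's English description precedes it below -/
import Mathlib

section
/- Let α ∈ (0,1) and let (a_n) be a positive decreasing sequence satisfying a_n = a_{n+1} + 2^α a_{n+1}^{1+α} with a₀ ∈ (0,1]. Then the products (T^k)'(a_k) = ∏_{ℓ=1}^{k} (1 + (1+α) 2^α a_ℓ^α) satisfy log ∏_{ℓ=1}^{k}(1 + (1+α)2^α a_ℓ^α) = c log k + O(1) as k → ∞ for some constant c > 0; in particular the product grows polynomially in k. -/
open Real Finset


lemma myLogLe {u : ℝ} (hu : 0 ≤ u) : Real.log (1 + u) ≤ u := by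
  have := Real.log_le_sub_one_of_pos (x := 1 + u) (by linarith)
  linarith

lemma myLogGe {u : ℝ} (hu : 0 ≤ u) : u / (1 + u) ≤ Real.log (1 + u) := by
  have h1 : (0:ℝ) < 1 + u := by linarith
  have h2 := Real.log_le_sub_one_of_pos (x := (1 + u)⁻¹) (by positivity)
  rw [Real.log_inv] at h2
  have : (1 + u)⁻¹ - 1 = -(u / (1 + u)) := by field_simp; ring
  rw [this] at h2
  linarith

lemma myG1 {α x : ℝ} (hα0 : 0 < α) (hα1 : α < 1) (hx : 0 ≤ x) :
    1 - ((1 + x) ^ α)⁻¹ ≤ α * x := by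
  have hw : (0:ℝ) < (1 + x) ^ α := Real.rpow_pos_of_pos (by linarith) α
  have hB : (1 + x) ^ α ≤ 1 + α * x :=
    rpow_one_add_le_one_add_mul_self (by linarith) hα0.le hα1.le
  have key : (1 - α * x) * ((1 + x) ^ α) ≤ 1 := by
    rcases le_or_gt (1 - α * x) 0 with h | h
    · have := mul_nonpos_of_nonpos_of_nonneg h hw.le
      linarith
    · nlinarith [mul_le_mul_of_nonneg_left hB h.le, sq_nonneg (α*x)]
  have h3 := mul_le_mul_of_nonneg_right key (inv_nonneg.mpr hw.le)
  rw [mul_assoc, mul_inv_cancel₀ hw.ne', mul_one, one_mul] at h3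
  linarith

lemma myG2 {α x : ℝ} (hα0 : 0 < α) (hα1 : α < 1) (hx : 0 ≤ x) :
    α * x / (1 + x) ≤ 1 - ((1 + x) ^ α)⁻¹ := by
  have h1 : (0:ℝ) < 1 + x := by linarith
  have hw : (0:ℝ) < (1 + x) ^ α := Real.rpow_pos_of_pos h1 α
  -- (1+x)^(1-α) ≤ 1 + (1-α)x
  have hB : (1 + x) ^ (1 - α) ≤ 1 + (1 - α) * x :=
    rpow_one_add_le_one_add_mul_self (by linarith) (by linarith) (by linarith)
  have hsplit : (1 + x) ^ α * (1 + x) ^ (1 - α) = 1 + x := by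
    rw [← Real.rpow_add h1]; norm_num
  -- (1+x)^α ≥ (1+x)/(1+(1-α)x)
  have hwge : (1 + x) / (1 + (1 - α) * x) ≤ (1 + x) ^ α := by
    rw [div_le_iff₀ (by nlinarith)]
    calc 1 + x = (1 + x) ^ α * (1 + x) ^ (1 - α) := hsplit.symm
      _ ≤ (1 + x) ^ α * (1 + (1 - α) * x) := by
          exact mul_le_mul_of_nonneg_left hB hw.le
  -- hence inverse bound
  have hd : (0:ℝ) < 1 + (1 - α) * x := by nlinarith
  have hinv : ((1 + x) ^ α)⁻¹ ≤ (1 + (1 - α) * x) / (1 + x) := by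
    have := inv_anti₀ (by positivity) hwge
    rwa [inv_div] at this
  have : 1 - (1 + (1 - α) * x) / (1 + x) = α * x / (1 + x) := by
    field_simp; ring
  linarith [this ▸ (by linarith [hinv] : 1 - (1 + (1 - α) * x) / (1 + x) ≤ 1 - ((1 + x) ^ α)⁻¹)]

lemma myLogLe' {u : ℝ} (hu : 0 ≤ u) : Real.log (1 + u) ≤ u := by
  have := Real.log_le_sub_one_of_pos (x := 1 + u) (by linarith); linarith

lemma myLogGe' {u : ℝ} (hu : 0 ≤ u) : u / (1 + u) ≤ Real.log (1 + u) := by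
  have h1 : (0:ℝ) < 1 + u := by linarith
  have h2 := Real.log_le_sub_one_of_pos (x := (1 + u)⁻¹) (by positivity)
  rw [Real.log_inv] at h2
  have : (1 + u)⁻¹ - 1 = -(u / (1 + u)) := by field_simp; ring
  rw [this] at h2; linarith

lemma mySumSq (k : ℕ) : ∑ ℓ ∈ Icc 1 k, (1:ℝ) / (ℓ:ℝ)^2 ≤ 2 := by
  have key : ∀ k : ℕ, 1 ≤ k → ∑ ℓ ∈ Icc 1 k, (1:ℝ) / (ℓ:ℝ)^2 ≤ 2 - 1/(k:ℝ) := by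
    intro k hk
    induction k with
    | zero => omega
    | succ n ih =>
      rcases Nat.eq_or_lt_of_le hk with h | h
      · simp [← h]; norm_num
      · have hn : 1 ≤ n := by omega
        rw [Finset.sum_Icc_succ_top (by omega)]
        have h1 : (0:ℝ) < n := by exact_mod_cast hn
        have h2 : (0:ℝ) < (n:ℝ) + 1 := by linarith
        have : (1:ℝ) / ((n:ℝ)+1)^2 ≤ 1/(n:ℝ) - 1/((n:ℝ)+1) := by
          rw [div_sub_div _ _ h1.ne' h2.ne', div_le_div_iff₀ (by positivity) (by positivity)]
          ring_nf; nlinarith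
        have := ih hn
        push_cast
        push_cast at this
        linarith
  rcases Nat.eq_zero_or_pos k with rfl | hk
  · simp
  · have := key k hk
    have : (0:ℝ) < k := by exact_mod_cast hk
    have := key k hk
    have hki : (0:ℝ) < 1/(k:ℝ) := by positivity
    linarith

lemma mySumPow (k : ℕ) : ∑ ℓ ∈ Icc 1 k, (1:ℝ) / ((ℓ:ℝ) * Real.sqrt ℓ) ≤ 3 := by
  have key : ∀ k : ℕ, 1 ≤ k →
      ∑ ℓ ∈ Icc 1 k, (1:ℝ) / ((ℓ:ℝ) * Real.sqrt ℓ) ≤ 3 - 2/Real.sqrt k := by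
    intro k hk
    induction k with
    | zero => omega
    | succ n ih =>
      rcases Nat.eq_or_lt_of_le hk with h | h
      · simp [← h]; norm_num
      · have hn : 1 ≤ n := by omega
        rw [Finset.sum_Icc_succ_top (by omega)]
        have h1 : (0:ℝ) < n := by exact_mod_cast hn
        have h2 : (0:ℝ) < (n:ℝ) + 1 := by linarith
        have hs1 : (0:ℝ) < Real.sqrt n := Real.sqrt_pos.mpr h1
        have hs2 : (0:ℝ) < Real.sqrt ((n:ℝ)+1) := Real.sqrt_pos.mpr h2
        have hsle : Real.sqrt n ≤ Real.sqrt ((n:ℝ)+1) := Real.sqrt_le_sqrt (by linarith)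
        have hsq1 : Real.sqrt n * Real.sqrt n = (n:ℝ) := Real.mul_self_sqrt h1.le
        have hsq2 : Real.sqrt ((n:ℝ)+1) * Real.sqrt ((n:ℝ)+1) = (n:ℝ)+1 :=
          Real.mul_self_sqrt h2.le
        have step : (1:ℝ) / (((n:ℝ)+1) * Real.sqrt ((n:ℝ)+1)) ≤
            2/Real.sqrt n - 2/Real.sqrt ((n:ℝ)+1) := by
          rw [div_sub_div _ _ hs1.ne' hs2.ne', div_le_div_iff₀ (by positivity) (by positivity)]
          nlinarith [mul_pos hs1 hs2, mul_le_mul_of_nonneg_left hsle hs2.le]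
        have := ih hn
        have hcast : ((n+1 : ℕ):ℝ) = (n:ℝ) + 1 := by push_cast; ring
        rw [hcast]
        linarith
  rcases Nat.eq_zero_or_pos k with rfl | hk
  · simp
  · have h1 : (0:ℝ) < k := by exact_mod_cast hk
    have hs : (0:ℝ) < Real.sqrt k := Real.sqrt_pos.mpr h1
    have := key k hk
    have : (0:ℝ) < 2/Real.sqrt k := by positivity
    linarith [key k hk]

lemma myHarmonic (k : ℕ) (hk : 1 ≤ k) :
    Real.log k ≤ ∑ ℓ ∈ Icc 1 k, (1:ℝ)/(ℓ:ℝ) ∧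
    ∑ ℓ ∈ Icc 1 k, (1:ℝ)/(ℓ:ℝ) ≤ 1 + Real.log k := by
  have key : ∀ k : ℕ, 1 ≤ k → Real.log ((k:ℝ)+1) ≤ ∑ ℓ ∈ Icc 1 k, (1:ℝ)/(ℓ:ℝ) ∧
      ∑ ℓ ∈ Icc 1 k, (1:ℝ)/(ℓ:ℝ) ≤ 1 + Real.log k := by
    intro k hk
    induction k with
    | zero => omega
    | succ n ih =>
      rcases Nat.eq_or_lt_of_le hk with h | h
      · obtain rfl : n = 0 := by omega
        simp only [Finset.Icc_self, Finset.sum_singleton, Nat.cast_one]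
        have := Real.log_le_sub_one_of_pos (x := (2:ℝ)) (by norm_num)
        constructor
        · norm_num; linarith
        · simp
      · have hn : 1 ≤ n := by omega
        obtain ⟨ih1, ih2⟩ := ih hn
        rw [Finset.sum_Icc_succ_top (by omega)]
        have h1 : (0:ℝ) < n := by exact_mod_cast hn
        have h2 : (0:ℝ) < (n:ℝ) + 1 := by linarith
        have hlogdiff : Real.log ((n:ℝ)+1) - Real.log n = Real.log (1 + 1/(n:ℝ)) := by
          rw [← Real.log_div h2.ne' h1.ne']
          congr 1; field_simp
        have hlogdiff2 : Real.log ((n:ℝ)+2) - Real.log ((n:ℝ)+1)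
            = Real.log (1 + 1/((n:ℝ)+1)) := by
          rw [← Real.log_div (by linarith) h2.ne']
          congr 1; field_simp; ring
        have hle : Real.log (1 + 1/((n:ℝ)+1)) ≤ 1/((n:ℝ)+1) := myLogLe' (by positivity)
        have hge : (1/(n:ℝ)) / (1 + 1/(n:ℝ)) ≤ Real.log (1 + 1/(n:ℝ)) := myLogGe' (by positivity)
        have heq : (1/(n:ℝ)) / (1 + 1/(n:ℝ)) = 1/((n:ℝ)+1) := by field_simp
        rw [heq] at hge
        have hcast : ((n+1 : ℕ):ℝ) = (n:ℝ) + 1 := by push_cast; ring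
        rw [hcast]
        have h12 : Real.log ((n:ℝ)+1+1) = Real.log ((n:ℝ)+2) := by ring_nf
        constructor
        · rw [h12]; linarith
        · linarith
  obtain ⟨h1, h2⟩ := key k hk
  have h0 : (0:ℝ) < k := by exact_mod_cast hk
  have : Real.log k ≤ Real.log ((k:ℝ)+1) := Real.log_le_log (by linarith) (by linarith)
  exact ⟨le_trans this h1, h2⟩

lemma myLogAbsBound {u v : ℝ} (hu : 0 ≤ u) (huv : u ≤ v) :
    |Real.log (1 + u) - u| ≤ v ^ 2 := by
  have h1 := myLogLe hu
  have h2 : u - u^2 ≤ Real.log (1 + u) := by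
    have h1' := myLogGe hu
    have h2' : u - u^2 ≤ u / (1 + u) := by
      rw [le_div_iff₀ (by linarith)]
      nlinarith [sq_nonneg u]
    linarith
  have hv : u^2 ≤ v^2 := by nlinarith
  exact abs_le.mpr ⟨by nlinarith, by nlinarith⟩

set_option maxHeartbeats 1000000 in
/-- Along the backward parabolic orbit `a_ℓ` of `T(x) = x + 2^α x^{1+α}` (so that
`a_n = a_{n+1} + 2^α a_{n+1}^{1+α}`, `a₀ ∈ (0,1]`), the derivative products
`(T^k)'(a_k) = ∏_{ℓ=1}^k (1 + (1+α) 2^α a_ℓ^α)` satisfy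
`log ∏_{ℓ=1}^k (1 + (1+α) 2^α a_ℓ^α) = c log k + O(1)` for some constant `c > 0`. -/
theorem stmt_10 (α : ℝ) (hα : α ∈ Set.Ioo (0 : ℝ) 1) (a : ℕ → ℝ)
    (ha0 : a 0 ∈ Set.Ioc (0 : ℝ) 1) (hapos : ∀ n, 0 < a n)
    (hdec : ∀ n, a (n + 1) < a n)
    (hrec : ∀ n, a n = a (n + 1) + 2 ^ α * a (n + 1) ^ (1 + α)) :
    ∃ c C : ℝ, 0 < c ∧ 0 ≤ C ∧ ∀ k : ℕ, 1 ≤ k →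
      |Real.log (∏ ℓ ∈ Finset.Icc 1 k, (1 + (1 + α) * 2 ^ α * a ℓ ^ α)) -
        c * Real.log k| ≤ C := by
  obtain ⟨hα0, hα1⟩ := hα
  obtain ⟨ha0p, ha01⟩ := ha0
  set A : ℝ := 2 ^ α with hAdef
  have hA0 : 0 < A := Real.rpow_pos_of_pos (by norm_num) α
  have hA1 : 1 < A := by
    have : (2:ℝ) ^ (0:ℝ) < 2 ^ α := Real.rpow_lt_rpow_of_exponent_lt (by norm_num) hα0
    simpa using this
  have hA2 : A ≤ 2 := by
    have : (2:ℝ) ^ α ≤ 2 ^ (1:ℝ) := Real.rpow_le_rpow_of_exponent_le (by norm_num) hα1.le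
    simpa using this
  -- a is bounded by 1
  have hale1 : ∀ n, a n ≤ 1 := by
    intro n
    induction n with
    | zero => exact ha01
    | succ m ih => exact le_trans (hdec m).le ih
  set p : ℕ → ℝ := fun n => a n ^ α with hpdef
  have hppos : ∀ n, 0 < p n := fun n => Real.rpow_pos_of_pos (hapos n) α
  have hple1 : ∀ n, p n ≤ 1 := fun n => Real.rpow_le_one (hapos n).le (hale1 n) hα0.le
  set b : ℕ → ℝ := fun n => (p n)⁻¹ with hbdef
  have hbpos : ∀ n, 0 < b n := fun n => inv_pos.mpr (hppos n)
  have hb1 : ∀ n, 1 ≤ b n := fun n => (one_le_inv₀ (hppos n)).mpr (hple1 n)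
  set x : ℕ → ℝ := fun n => A * p (n + 1) with hxdef
  have hx0 : ∀ n, 0 < x n := fun n => mul_pos hA0 (hppos (n + 1))
  have hx2 : ∀ n, x n ≤ 2 := by
    intro n
    calc A * p (n+1) ≤ A * 1 := mul_le_mul_of_nonneg_left (hple1 (n+1)) hA0.le
      _ ≤ 2 := by linarith
  have hbx : ∀ n, b (n+1) * x n = A := by
    intro n
    simp only [hbdef, hxdef]
    field_simp
    exact div_self (hppos (n+1)).ne'
  -- recursion for p
  have hp_rec : ∀ n, p n = p (n+1) * (1 + x n) ^ α := by
    intro n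
    have h1 : a (n+1) ^ ((1:ℝ) + α) = a (n+1) * p (n+1) := by
      rw [Real.rpow_add (hapos (n+1)), Real.rpow_one]
    have h2 : a n = a (n+1) * (1 + x n) := by
      rw [hrec n, h1]; simp only [hxdef]; ring
    simp only [hpdef]
    rw [h2, Real.mul_rpow (hapos (n+1)).le (by nlinarith [hx0 n])]
  -- recursion for b
  have hb_rec : ∀ n, b (n+1) - b n = b (n+1) * (1 - ((1 + x n) ^ α)⁻¹) := by
    intro n
    have hw : (0:ℝ) < (1 + x n) ^ α := Real.rpow_pos_of_pos (by nlinarith [hx0 n]) α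
    have : b n = b (n+1) * ((1 + x n) ^ α)⁻¹ := by
      simp only [hbdef]
      rw [hp_rec n, mul_inv]
    rw [this]; ring
  -- increment bounds
  have hone_x : ∀ n, (0:ℝ) < 1 + x n := fun n => by nlinarith [hx0 n]
  have hdu : ∀ n, b (n+1) - b n ≤ α * A := by
    intro n
    rw [hb_rec n]
    calc b (n+1) * (1 - ((1 + x n) ^ α)⁻¹) ≤ b (n+1) * (α * x n) :=
          mul_le_mul_of_nonneg_left (myG1 hα0 hα1 (hx0 n).le) (hbpos (n+1)).le
      _ = α * (b (n+1) * x n) := by ring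
      _ = α * A := by rw [hbx n]
  have hdl1 : ∀ n, α * A / 3 ≤ b (n+1) - b n := by
    intro n
    rw [hb_rec n]
    have hg : α * x n / 3 ≤ 1 - ((1 + x n) ^ α)⁻¹ := by
      have h1 := myG2 hα0 hα1 (hx0 n).le
      have h2 : α * x n / 3 ≤ α * x n / (1 + x n) := by
        apply div_le_div_of_nonneg_left (mul_nonneg hα0.le (hx0 n).le) (hone_x n)
        nlinarith [hx2 n]
      linarith
    calc α * A / 3 = α * (b (n+1) * x n) / 3 := by rw [hbx n]
      _ = b (n+1) * (α * x n / 3) := by ring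
      _ ≤ b (n+1) * (1 - ((1 + x n) ^ α)⁻¹) :=
          mul_le_mul_of_nonneg_left hg (hbpos (n+1)).le
  have hdl2 : ∀ n, α * A - 4 / b (n+1) ≤ b (n+1) - b n := by
    intro n
    rw [hb_rec n]
    have hg : α * x n - α * (x n)^2 ≤ 1 - ((1 + x n) ^ α)⁻¹ := by
      have h1 := myG2 hα0 hα1 (hx0 n).le
      have h2 : α * x n - α * (x n)^2 ≤ α * x n / (1 + x n) := by
        rw [le_div_iff₀ (hone_x n)]
        nlinarith [hx0 n, hα0, mul_pos (mul_pos (hx0 n) (hx0 n)) (hx0 n)]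
      linarith
    have key : b (n+1) * (α * x n - α * (x n)^2) = α * A - α * A * x n := by
      linear_combination (α - α * x n) * (hbx n)
    have hAx : α * A * x n ≤ 4 / b (n+1) := by
      rw [div_eq_mul_inv]
      have hbinv : x n = A * (b (n+1))⁻¹ := by
        rw [← hbx n, mul_comm (b (n+1)) (x n), mul_assoc, mul_inv_cancel₀ (hbpos (n+1)).ne', mul_one]
      rw [hbinv]
      have h4 : α * A * A ≤ 4 := by nlinarith [hA0.le, hA2, hα1.le, mul_nonneg hA0.le hA0.le]
      have h5 : (0:ℝ) ≤ (b (n+1))⁻¹ := inv_nonneg.mpr (hbpos (n+1)).le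
      nlinarith [h4, h5]
    calc α * A - 4 / b (n+1) ≤ α * A - α * A * x n := by linarith
      _ = b (n+1) * (α * x n - α * (x n)^2) := key.symm
      _ ≤ b (n+1) * (1 - ((1 + x n) ^ α)⁻¹) :=
          mul_le_mul_of_nonneg_left hg (hbpos (n+1)).le
  set κ : ℝ := α * A / 3 with hκdef
  have hκ0 : 0 < κ := by positivity
  -- linear lower growth
  have hblow : ∀ n : ℕ, 1 + κ * n ≤ b n := by
    intro n
    induction n with
    | zero => simpa using hb1 0
    | succ m ih =>
      have := hdl1 m
      have hcast : ((m+1 : ℕ):ℝ) = (m:ℝ) + 1 := by push_cast; ring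
      rw [hcast]
      have : 1 + κ * ((m:ℝ)+1) = (1 + κ * m) + κ := by ring
      rw [this]
      linarith [hdl1 m]
  -- error term e n = b n - α A n
  have he_le : ∀ n : ℕ, b n - α * A * n ≤ b 0 := by
    intro n
    induction n with
    | zero => simp
    | succ m ih =>
      have h := hdu m
      have hcast : ((m+1 : ℕ):ℝ) = (m:ℝ) + 1 := by push_cast; ring
      rw [hcast]
      nlinarith [hdu m]
  have he_ge : ∀ n : ℕ, b 0 - (4/κ) * (∑ ℓ ∈ Icc 1 n, (1:ℝ)/(ℓ:ℝ)) ≤ b n - α * A * n := by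
    intro n
    induction n with
    | zero => simp
    | succ m ih =>
      rw [Finset.sum_Icc_succ_top (by omega)]
      have hcast : ((m+1 : ℕ):ℝ) = (m:ℝ) + 1 := by push_cast; ring
      rw [hcast]
      have hb' : κ * ((m:ℝ)+1) ≤ b (m+1) := by
        have := hblow (m+1)
        rw [hcast] at this
        linarith
      have hbp : (0:ℝ) < κ * ((m:ℝ)+1) := by positivity
      have hstep : 4 / b (m+1) ≤ (4/κ) * (1/((m:ℝ)+1)) := by
        have h1 : 4 / b (m+1) ≤ 4 / (κ * ((m:ℝ)+1)) :=
          div_le_div_of_nonneg_left (by norm_num) hbp hb'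
        have h2 : 4 / (κ * ((m:ℝ)+1)) = (4/κ) * (1/((m:ℝ)+1)) := by
          field_simp
        linarith
      have := hdl2 m
      have hbpos' := hbpos (m+1)
      nlinarith [hdl2 m]
  set M : ℝ := (1 + α) * A with hMdef
  have hM0 : (0:ℝ) < M := by positivity
  set c : ℝ := (1 + α) / α with hcdef
  have hc0 : (0:ℝ) < c := by positivity
  set C₁ : ℝ := (M/κ)^2 + M * (b 0 + 4/κ) / (κ*α*A) with hC1def
  set C₂ : ℝ := (8*M/κ) / (κ*α*A) with hC2def
  have hb00 : (0:ℝ) < b 0 := hbpos 0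
  have hC10 : (0:ℝ) ≤ C₁ := by positivity
  have hC20 : (0:ℝ) ≤ C₂ := by positivity
  -- per-term estimate
  have hterm : ∀ ℓ : ℕ, 1 ≤ ℓ → |Real.log (1 + M / b ℓ) - c * (1/(ℓ:ℝ))| ≤
      C₁ * (1/(ℓ:ℝ)^2) + C₂ * (1/((ℓ:ℝ) * Real.sqrt ℓ)) := by
    intro ℓ hℓ
    have hℓR : (1:ℝ) ≤ (ℓ:ℝ) := by exact_mod_cast hℓ
    have hℓ0 : (0:ℝ) < (ℓ:ℝ) := by linarith
    have hs0 : (0:ℝ) < Real.sqrt ℓ := Real.sqrt_pos.mpr hℓ0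
    have hss : Real.sqrt ℓ * Real.sqrt ℓ = (ℓ:ℝ) := Real.mul_self_sqrt hℓ0.le
    have hbl : κ * ℓ ≤ b ℓ := by have := hblow ℓ; linarith
    have hbℓ := hbpos ℓ
    have hu0 : (0:ℝ) ≤ M / b ℓ := by positivity
    have hu_le : M / b ℓ ≤ M / (κ * ℓ) :=
      div_le_div_of_nonneg_left hM0.le (by positivity) hbl
    have habs1 : |Real.log (1 + M / b ℓ) - M / b ℓ| ≤ (M/κ)^2 * (1/(ℓ:ℝ)^2) := by
      have heq : (M/κ)^2 * (1/(ℓ:ℝ)^2) = (M/(κ*ℓ))^2 := by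
        field_simp
      rw [heq]
      exact myLogAbsBound hu0 hu_le
    -- |u - c/ℓ| bound
    have hcl : c * (1/(ℓ:ℝ)) = M / (α*A*ℓ) := by
      rw [hcdef, hMdef]
      field_simp
    have hdiffeq : M / b ℓ - M / (α*A*ℓ) = M * ((α*A*ℓ) - b ℓ) / (b ℓ * (α*A*ℓ)) := by
      field_simp
    have hlog0 : (0:ℝ) ≤ Real.log ℓ := Real.log_nonneg hℓR
    have hlog2 : Real.log ℓ ≤ 2 * Real.sqrt ℓ := by
      have h1 : Real.log (Real.sqrt ℓ) = Real.log ℓ / 2 := Real.log_sqrt hℓ0.le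
      have h2 : Real.log (Real.sqrt ℓ) ≤ Real.sqrt ℓ - 1 := by
        have := Real.log_le_sub_one_of_pos hs0
        linarith
      linarith
    have hH := (myHarmonic ℓ hℓ).2
    have heabs : |(α*A*(ℓ:ℝ)) - b ℓ| ≤ (b 0 + 4/κ) + (8/κ) * Real.sqrt ℓ := by
      rw [abs_sub_comm]
      have h1 := he_le ℓ
      have h2 := he_ge ℓ
      have h3 : (4/κ) * (∑ j ∈ Icc 1 ℓ, (1:ℝ)/(j:ℝ)) ≤ (4/κ) * (1 + Real.log ℓ) := by
        apply mul_le_mul_of_nonneg_left hH (by positivity)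
      apply abs_le.mpr
      constructor
      · have hmono : (4/κ) * (1 + Real.log ℓ) ≤ (4/κ) * (1 + 2 * Real.sqrt ℓ) :=
          mul_le_mul_of_nonneg_left (by linarith [hlog2]) (by positivity)
        have heq : (4/κ) * (1 + 2 * Real.sqrt ℓ) = 4/κ + (8/κ) * Real.sqrt ℓ := by ring
        linarith [h2, h3]
      · have hx1 : (0:ℝ) ≤ 4/κ := by positivity
        have hx2 : (0:ℝ) ≤ 8/κ * Real.sqrt ℓ := by positivity
        linarith [h1]
    have hDge : (κ*ℓ) * (α*A*ℓ) ≤ b ℓ * (α*A*ℓ) :=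
      mul_le_mul_of_nonneg_right hbl (by positivity)
    have habs2 : |M / b ℓ - c * (1/(ℓ:ℝ))| ≤
        M * ((b 0 + 4/κ) + (8/κ) * Real.sqrt ℓ) / ((κ*ℓ) * (α*A*ℓ)) := by
      rw [hcl, hdiffeq, abs_div, abs_mul]
      rw [abs_of_pos hM0, abs_of_pos (by positivity : (0:ℝ) < b ℓ * (α*A*ℓ))]
      apply div_le_div₀ (by positivity)
        (mul_le_mul_of_nonneg_left heabs hM0.le) (by positivity) hDge
    have hsplitnum : M * ((b 0 + 4/κ) + (8/κ) * Real.sqrt ℓ) / ((κ*ℓ) * (α*A*ℓ)) =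
        (M * (b 0 + 4/κ) / (κ*α*A)) * (1/(ℓ:ℝ)^2) + C₂ * (Real.sqrt ℓ / (ℓ:ℝ)^2) := by
      rw [hC2def]
      field_simp
    have hsr : Real.sqrt ℓ / (ℓ:ℝ)^2 = 1/((ℓ:ℝ) * Real.sqrt ℓ) := by
      rw [div_eq_div_iff (by positivity) (by positivity), one_mul]
      calc Real.sqrt ℓ * ((ℓ:ℝ) * Real.sqrt ℓ) = (Real.sqrt ℓ * Real.sqrt ℓ) * ℓ := by ring
        _ = (ℓ:ℝ) * ℓ := by rw [hss]
        _ = (ℓ:ℝ)^2 := by ring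
    rw [hsr] at hsplitnum
    have htri := abs_sub_abs_le_abs_sub (Real.log (1 + M / b ℓ) - c * (1/(ℓ:ℝ))) 0
    calc |Real.log (1 + M / b ℓ) - c * (1/(ℓ:ℝ))| ≤
        |Real.log (1 + M / b ℓ) - M / b ℓ| + |M / b ℓ - c * (1/(ℓ:ℝ))| := by
          have := abs_sub_le (Real.log (1 + M / b ℓ)) (M / b ℓ) (c * (1/(ℓ:ℝ)))
          exact this
      _ ≤ (M/κ)^2 * (1/(ℓ:ℝ)^2) +
          ((M * (b 0 + 4/κ) / (κ*α*A)) * (1/(ℓ:ℝ)^2) + C₂ * (1/((ℓ:ℝ) * Real.sqrt ℓ))) := by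
          rw [← hsplitnum]
          exact add_le_add habs1 habs2
      _ = C₁ * (1/(ℓ:ℝ)^2) + C₂ * (1/((ℓ:ℝ) * Real.sqrt ℓ)) := by
          rw [hC1def]; ring
  -- final assembly
  refine ⟨c, 2*C₁ + 3*C₂ + c, hc0, by positivity, ?_⟩
  intro k hk
  have hkR : (1:ℝ) ≤ (k:ℝ) := by exact_mod_cast hk
  have hMp : ∀ ℓ : ℕ, 1 + (1 + α) * A * a ℓ ^ α = 1 + M / b ℓ := by
    intro ℓ
    have : M / b ℓ = M * p ℓ := by
      simp only [hbdef]
      rw [div_eq_mul_inv, inv_inv]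
    rw [this, hMdef, hpdef]
  have hprod : Real.log (∏ ℓ ∈ Finset.Icc 1 k, (1 + (1 + α) * A * a ℓ ^ α)) =
      ∑ ℓ ∈ Finset.Icc 1 k, Real.log (1 + M / b ℓ) := by
    rw [Real.log_prod]
    · exact Finset.sum_congr rfl fun ℓ _ => by rw [hMp ℓ]
    · intro ℓ _
      rw [hMp ℓ]
      have h := div_pos hM0 (hbpos ℓ)
      exact ne_of_gt (by linarith)
  rw [hprod]
  have hsplit : ∑ ℓ ∈ Finset.Icc 1 k, Real.log (1 + M / b ℓ) - c * Real.log k =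
      (∑ ℓ ∈ Finset.Icc 1 k, (Real.log (1 + M / b ℓ) - c * (1/(ℓ:ℝ)))) +
      c * ((∑ ℓ ∈ Finset.Icc 1 k, (1:ℝ)/(ℓ:ℝ)) - Real.log k) := by
    rw [Finset.sum_sub_distrib, ← Finset.mul_sum]
    ring
  rw [hsplit]
  have hbound1 : |∑ ℓ ∈ Finset.Icc 1 k, (Real.log (1 + M / b ℓ) - c * (1/(ℓ:ℝ)))| ≤
      2*C₁ + 3*C₂ := by
    calc |∑ ℓ ∈ Finset.Icc 1 k, (Real.log (1 + M / b ℓ) - c * (1/(ℓ:ℝ)))| ≤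
        ∑ ℓ ∈ Finset.Icc 1 k, |Real.log (1 + M / b ℓ) - c * (1/(ℓ:ℝ))| :=
          Finset.abs_sum_le_sum_abs _ _
      _ ≤ ∑ ℓ ∈ Finset.Icc 1 k, (C₁ * (1/(ℓ:ℝ)^2) + C₂ * (1/((ℓ:ℝ) * Real.sqrt ℓ))) := by
          apply Finset.sum_le_sum
          intro ℓ hℓ
          exact hterm ℓ (Finset.mem_Icc.mp hℓ).1
      _ = C₁ * (∑ ℓ ∈ Finset.Icc 1 k, (1:ℝ)/(ℓ:ℝ)^2) +
          C₂ * (∑ ℓ ∈ Finset.Icc 1 k, (1:ℝ)/((ℓ:ℝ) * Real.sqrt ℓ)) := by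
          rw [Finset.sum_add_distrib, Finset.mul_sum, Finset.mul_sum]
      _ ≤ C₁ * 2 + C₂ * 3 :=
          add_le_add (mul_le_mul_of_nonneg_left (mySumSq k) hC10)
            (mul_le_mul_of_nonneg_left (mySumPow k) hC20)
      _ = 2*C₁ + 3*C₂ := by ring
  have hH := myHarmonic k hk
  have hbound2 : |c * ((∑ ℓ ∈ Finset.Icc 1 k, (1:ℝ)/(ℓ:ℝ)) - Real.log k)| ≤ c := by
    rw [abs_mul, abs_of_pos hc0]
    have habs : |(∑ ℓ ∈ Finset.Icc 1 k, (1:ℝ)/(ℓ:ℝ)) - Real.log k| ≤ 1 :=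
      abs_le.mpr ⟨by linarith [hH.1], by linarith [hH.2]⟩
    calc c * |(∑ ℓ ∈ Finset.Icc 1 k, (1:ℝ)/(ℓ:ℝ)) - Real.log k| ≤ c * 1 :=
          mul_le_mul_of_nonneg_left habs hc0.le
      _ = c := by ring
  calc |(∑ ℓ ∈ Finset.Icc 1 k, (Real.log (1 + M / b ℓ) - c * (1/(ℓ:ℝ)))) +
      c * ((∑ ℓ ∈ Finset.Icc 1 k, (1:ℝ)/(ℓ:ℝ)) - Real.log k)| ≤
      |∑ ℓ ∈ Finset.Icc 1 k, (Real.log (1 + M / b ℓ) - c * (1/(ℓ:ℝ)))| +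
      |c * ((∑ ℓ ∈ Finset.Icc 1 k, (1:ℝ)/(ℓ:ℝ)) - Real.log k)| := abs_add_le _ _
    _ ≤ (2*C₁ + 3*C₂) + c := add_le_add hbound1 hbound2
end

section
/- With ϑ₁,...,ϑ_n ∈ [0,1), H_i > 0, Σ H_i = 1, n ≥ 2, and λ_k = [Σ_i (1−ϑ_i)² ϑ_i^{k−1} H_i]/[Σ_i (1−ϑ_i) H_i]: the sequence (λ_k) is geometric (i.e., λ_{k+1}/λ_k is constant in k) if and only if all ϑ_i with (1−ϑ_i)²H_i > 0 are equal. In particular if ϑ₁ ≠ ϑ₂ with ϑ₁, ϑ₂ ∈ (0,1), the limiting cluster distribution is not geometric, hence the compound Poisson law is not Pólya–Aeppli. -/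
/-!
Up to the constant factor `1 / Σ (1 - ϑ_i) H_i`, `λ_{m+1}` is the power sum `T_m = Σ w_i ϑ_i^m`
with weights `w_i = (1 - ϑ_i)² H_i`. If `T_{m+1} = r T_m` for all `m`, then
`Σ w_i (ϑ_i - r)² = T_2 - 2 r T_1 + r² T_0 = 0`, so every `ϑ_i` of positive weight equals `r`;
conversely, a common value `r` of these `ϑ_i` is the ratio of the sequence.
-/

open Finset

section PowerSums

variable {ι : Type*} [Fintype ι]

lemma sum_mul_sub_sq_eq (w x : ι → ℝ) (r : ℝ) :
    ∑ i, w i * (x i - r) ^ 2 =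
      ∑ i, w i * x i ^ 2 - 2 * r * ∑ i, w i * x i ^ 1 + r ^ 2 * ∑ i, w i * x i ^ 0 := by
  simp only [mul_sum, ← sum_sub_distrib, ← sum_add_distrib]
  exact sum_congr rfl fun i _ => by ring

lemma eq_of_sum_mul_pow_succ_eq_mul {w x : ι → ℝ} (hw : ∀ i, 0 ≤ w i) {r : ℝ}
    (h : ∀ m, ∑ i, w i * x i ^ (m + 1) = r * ∑ i, w i * x i ^ m) {i : ι} (hi : 0 < w i) :
    x i = r := by
  have hzero : ∑ j, w j * (x j - r) ^ 2 = 0 := by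
    rw [sum_mul_sub_sq_eq, h 1, h 0]
    ring
  have hterm := (sum_eq_zero_iff_of_nonneg fun j _ => mul_nonneg (hw j) (sq_nonneg (x j - r))).1
    hzero i (mem_univ i)
  rw [mul_eq_zero, or_iff_right hi.ne', sq_eq_zero_iff, sub_eq_zero] at hterm
  exact hterm

lemma sum_mul_pow_succ_eq_mul {w x : ι → ℝ} {r : ℝ} (h : ∀ i, w i ≠ 0 → x i = r) (m : ℕ) :
    ∑ i, w i * x i ^ (m + 1) = r * ∑ i, w i * x i ^ m := by
  rw [mul_sum]
  refine sum_congr rfl fun i _ => ?_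
  by_cases hi : w i = 0
  · simp [hi]
  · rw [h i hi, pow_succ]
    ring

theorem exists_sum_mul_pow_succ_eq_mul_iff {w x : ι → ℝ} (hw : ∀ i, 0 ≤ w i) :
    (∃ r, ∀ m, ∑ i, w i * x i ^ (m + 1) = r * ∑ i, w i * x i ^ m) ↔
      ∀ i j, 0 < w i → 0 < w j → x i = x j := by
  constructor
  · rintro ⟨r, h⟩ i j hi hj
    rw [eq_of_sum_mul_pow_succ_eq_mul hw h hi, eq_of_sum_mul_pow_succ_eq_mul hw h hj]
  · intro h
    by_cases hpos : ∃ i, 0 < w i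
    · obtain ⟨i₀, hi₀⟩ := hpos
      exact ⟨x i₀, sum_mul_pow_succ_eq_mul fun i hi => h i i₀ ((hw i).lt_of_ne' hi) hi₀⟩
    · simp only [not_exists, not_lt] at hpos
      exact ⟨0, sum_mul_pow_succ_eq_mul fun i hi => (hi ((hpos i).antisymm (hw i))).elim⟩

end PowerSums

lemma exists_mul_eq_iff_of_eq_div {T lam : ℕ → ℝ} {D : ℝ} (hD : D ≠ 0)
    (hlam : ∀ k, 1 ≤ k → lam k = T (k - 1) / D) :
    (∃ r, ∀ k, 1 ≤ k → lam (k + 1) = r * lam k) ↔ ∃ r, ∀ m, T (m + 1) = r * T m := by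
  have key : ∀ r m, lam (m + 1 + 1) = r * lam (m + 1) ↔ T (m + 1) = r * T m := fun r m => by
    rw [hlam _ (by omega), hlam _ (by omega), Nat.add_sub_cancel, Nat.add_sub_cancel,
      mul_div_assoc', div_left_inj' hD]
  refine exists_congr fun r => ⟨fun h m => (key r m).1 (h (m + 1) (by omega)), fun h k hk => ?_⟩
  obtain ⟨m, rfl⟩ := Nat.exists_eq_add_of_le' hk
  exact (key r m).2 (h m)

theorem stmt_13_general (n : ℕ) (hn : 2 ≤ n) (ϑ H : Fin n → ℝ)
    (hϑ : ∀ i, ϑ i ∈ Set.Ico (0 : ℝ) 1) (hH : ∀ i, 0 < H i)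
    (lam : ℕ → ℝ)
    (hlam : ∀ k, 1 ≤ k →
      lam k = (∑ i, (1 - ϑ i) ^ 2 * ϑ i ^ (k - 1) * H i) / (∑ i, (1 - ϑ i) * H i)) :
    ((∃ r : ℝ, ∀ k, 1 ≤ k → lam (k + 1) = r * lam k) ↔
      ∀ i j : Fin n, 0 < (1 - ϑ i) ^ 2 * H i → 0 < (1 - ϑ j) ^ 2 * H j → ϑ i = ϑ j) ∧
    (∀ i j : Fin n, ϑ i ∈ Set.Ioo (0 : ℝ) 1 → ϑ j ∈ Set.Ioo (0 : ℝ) 1 → ϑ i ≠ ϑ j →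
      ¬∃ r : ℝ, ∀ k, 1 ≤ k → lam (k + 1) = r * lam k) := by
  have hw : ∀ i, 0 < (1 - ϑ i) ^ 2 * H i := fun i =>
    mul_pos (pow_pos (sub_pos.2 (hϑ i).2) 2) (hH i)
  have hD : ∑ i, (1 - ϑ i) * H i ≠ 0 :=
    (sum_pos (fun i _ => mul_pos (sub_pos.2 (hϑ i).2) (hH i)) ⟨⟨0, by omega⟩, mem_univ _⟩).ne'
  have hlam_pow : ∀ k, 1 ≤ k → lam k =
      (∑ i, (1 - ϑ i) ^ 2 * H i * ϑ i ^ (k - 1)) / ∑ i, (1 - ϑ i) * H i := fun k hk => by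
    rw [hlam k hk, sum_congr rfl fun i _ => mul_right_comm _ _ (H i)]
  have main := (exists_mul_eq_iff_of_eq_div
    (T := fun m => ∑ i, (1 - ϑ i) ^ 2 * H i * ϑ i ^ m) hD hlam_pow).trans
    (exists_sum_mul_pow_succ_eq_mul_iff fun i => (hw i).le)
  exact ⟨main, fun i j _ _ hne hgeo => hne (main.1 hgeo i j (hw i) (hw j))⟩

/-- With `λ_k = Σ_i (1-ϑ_i)² ϑ_i^{k-1} H_i / Σ_i (1-ϑ_i) H_i` (`ϑ_i ∈ [0,1)`, `H_i > 0`,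
`Σ H_i = 1`, `n ≥ 2`): the sequence `(λ_k)` is geometric iff all the `ϑ_i` with
`(1-ϑ_i)² H_i > 0` are equal; in particular if `ϑ₁ ≠ ϑ₂` with `ϑ₁, ϑ₂ ∈ (0,1)` then
`(λ_k)` is not geometric, so the compound Poisson law is not Pólya–Aeppli. -/
theorem stmt_13 (n : ℕ) (hn : 2 ≤ n) (ϑ H : Fin n → ℝ)
    (hϑ : ∀ i, ϑ i ∈ Set.Ico (0 : ℝ) 1) (hH : ∀ i, 0 < H i) (hHsum : ∑ i, H i = 1)
    (lam : ℕ → ℝ)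
    (hlam : ∀ k, 1 ≤ k →
      lam k = (∑ i, (1 - ϑ i) ^ 2 * ϑ i ^ (k - 1) * H i) / (∑ i, (1 - ϑ i) * H i)) :
    ((∃ r : ℝ, ∀ k, 1 ≤ k → lam (k + 1) = r * lam k) ↔
      ∀ i j : Fin n, 0 < (1 - ϑ i) ^ 2 * H i → 0 < (1 - ϑ j) ^ 2 * H j → ϑ i = ϑ j) ∧
    (∀ i j : Fin n, ϑ i ∈ Set.Ioo (0 : ℝ) 1 → ϑ j ∈ Set.Ioo (0 : ℝ) 1 → ϑ i ≠ ϑ j →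
      ¬∃ r : ℝ, ∀ k, 1 ≤ k → lam (k + 1) = r * lam k) :=
  stmt_13_general n hn ϑ H hϑ hH lam hlam
end

section
/- Let α ∈ (0,1) and ψ₀ the parabolic inverse branch of T(x) = x + 2^α x^{1+α} fixing 0. Then there is a constant C such that for all k ≥ 1 and all x in the fundamental interval V₀ = (a₁, a₀], the derivative satisfies |Dψ₀^k(x)| ≤ C k^{-(1/α + 1)}. -/
open Real Finset

-- log lower bound: s - s^2 ≤ log(1+s) for s ≥ 0
lemma aux_log_lb {s : ℝ} (hs : 0 ≤ s) : s - s^2 ≤ Real.log (1 + s) := by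
  have h1 : (0:ℝ) < 1 + s := by linarith
  have h2 : Real.log ((1+s)⁻¹) ≤ (1+s)⁻¹ - 1 :=
    Real.log_le_sub_one_of_pos (by positivity)
  rw [Real.log_inv] at h2
  have h3 : 1 - (1+s)⁻¹ ≤ Real.log (1+s) := by linarith
  have h4 : s - s^2 ≤ 1 - (1+s)⁻¹ := by
    have e : 1 - (1+s)⁻¹ = s/(1+s) := by field_simp; ring
    rw [e, le_div_iff₀ h1]; nlinarith
  linarith

-- log upper bound: log(1+s) ≤ s
lemma aux_log_ub {s : ℝ} (hs : 0 ≤ s) : Real.log (1 + s) ≤ s := by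
  have := Real.log_le_sub_one_of_pos (show (0:ℝ) < 1 + s by linarith)
  linarith

-- product lower bound
lemma aux_prod_lb {β c : ℝ} (hβ : 0 < β) (hc : 0 ≤ c) {k : ℕ} (hk : 1 ≤ k) :
    Real.exp (-(β * Real.log (2+c) + β^2)) * (k:ℝ)^β
      ≤ ∏ j ∈ Finset.range k, (1 + β/((j:ℝ)+2+c)) := by
  have hden : ∀ j : ℕ, (0:ℝ) < (j:ℝ)+2+c := fun j => by positivity
  have hfac : ∀ j : ℕ, (0:ℝ) < 1 + β/((j:ℝ)+2+c) := fun j => by positivity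
  have hprodpos : (0:ℝ) < ∏ j ∈ Finset.range k, (1 + β/((j:ℝ)+2+c)) :=
    Finset.prod_pos fun j _ => hfac j
  have hlogprod : Real.log (∏ j ∈ Finset.range k, (1 + β/((j:ℝ)+2+c)))
      = ∑ j ∈ Finset.range k, Real.log (1 + β/((j:ℝ)+2+c)) :=
    Real.log_prod (fun j _ => ne_of_gt (hfac j))
  -- lower bound each log
  have hterm : ∀ j : ℕ, β * (Real.log ((j:ℝ)+1+2+c) - Real.log ((j:ℝ)+2+c))
      - β^2 * (1/((j:ℝ)+1) - 1/((j:ℝ)+2)) ≤ Real.log (1 + β/((j:ℝ)+2+c)) := by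
    intro j
    set t : ℝ := 1/((j:ℝ)+2+c) with ht
    have htpos : 0 < t := by positivity
    have h1 : β*t - (β*t)^2 ≤ Real.log (1 + β*t) := aux_log_lb (by positivity)
    have h2 : Real.log ((j:ℝ)+1+2+c) - Real.log ((j:ℝ)+2+c) ≤ t := by
      rw [← Real.log_div (by positivity) (ne_of_gt (hden j))]
      have : ((j:ℝ)+1+2+c)/((j:ℝ)+2+c) = 1 + t := by
        rw [ht]; field_simp; ring
      rw [this]; exact aux_log_ub (le_of_lt htpos)
    have h3 : (β*t)^2 ≤ β^2 * (1/((j:ℝ)+1) - 1/((j:ℝ)+2)) := by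
      have e1 : 1/((j:ℝ)+1) - 1/((j:ℝ)+2) = 1/(((j:ℝ)+1)*((j:ℝ)+2)) := by
        have : ((j:ℝ)+1) > 0 := by positivity
        have : ((j:ℝ)+2) > 0 := by positivity
        field_simp; ring
      rw [e1]
      have e2 : (β*t)^2 = β^2 * (1/(((j:ℝ)+2+c)*((j:ℝ)+2+c))) := by
        rw [ht]; field_simp
      rw [e2]
      have : (1:ℝ)/(((j:ℝ)+2+c)*((j:ℝ)+2+c)) ≤ 1/(((j:ℝ)+1)*((j:ℝ)+2)) := by
        apply one_div_le_one_div_of_le (by positivity)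
        nlinarith [hden j, sq_nonneg c, (Nat.cast_nonneg j : (0:ℝ) ≤ j)]
      nlinarith [sq_nonneg β]
    have hβt : β/((j:ℝ)+2+c) = β*t := by rw [ht]; ring
    rw [hβt]
    nlinarith [mul_le_mul_of_nonneg_left h2 (le_of_lt hβ)]
  have hsum : ∑ j ∈ Finset.range k,
      (β * (Real.log ((j:ℝ)+1+2+c) - Real.log ((j:ℝ)+2+c))
        - β^2 * (1/((j:ℝ)+1) - 1/((j:ℝ)+2)))
      ≤ ∑ j ∈ Finset.range k, Real.log (1 + β/((j:ℝ)+2+c)) :=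
    Finset.sum_le_sum fun j _ => hterm j
  -- compute telescoping sums
  have tel1 : ∑ j ∈ Finset.range k, (Real.log ((j:ℝ)+1+2+c) - Real.log ((j:ℝ)+2+c))
      = Real.log ((k:ℝ)+2+c) - Real.log ((0:ℝ)+2+c) := by
    have := Finset.sum_range_sub (fun j : ℕ => Real.log ((j:ℝ)+2+c)) k
    simp only [Nat.cast_succ] at this
    convert this using 2 with j
    push_cast; ring_nf
  have tel2 : ∑ j ∈ Finset.range k, (1/((j:ℝ)+1) - 1/((j:ℝ)+2))
      = 1/((0:ℝ)+1) - 1/((k:ℝ)+1) := by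
    have := Finset.sum_range_sub (fun j : ℕ => -(1/((j:ℝ)+1))) k
    simp only [Nat.cast_succ] at this
    have e : ∀ j ∈ Finset.range k, (1/((j:ℝ)+1) - 1/((j:ℝ)+2))
        = (-(1/(((j:ℝ)+1)+1)) - -(1/((j:ℝ)+1))) := by
      intro j _; ring_nf
    rw [Finset.sum_congr rfl e, this]; ring_nf
  -- combine
  have hsum2 : β * (Real.log ((k:ℝ)+2+c) - Real.log (2+c)) - β^2
      ≤ Real.log (∏ j ∈ Finset.range k, (1 + β/((j:ℝ)+2+c))) := by
    rw [hlogprod]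
    have e : ∑ j ∈ Finset.range k,
        (β * (Real.log ((j:ℝ)+1+2+c) - Real.log ((j:ℝ)+2+c))
          - β^2 * (1/((j:ℝ)+1) - 1/((j:ℝ)+2)))
        = β * (∑ j ∈ Finset.range k, (Real.log ((j:ℝ)+1+2+c) - Real.log ((j:ℝ)+2+c)))
          - β^2 * (∑ j ∈ Finset.range k, (1/((j:ℝ)+1) - 1/((j:ℝ)+2))) := by
      rw [Finset.mul_sum, Finset.mul_sum, ← Finset.sum_sub_distrib]
    rw [e, tel1, tel2] at hsum
    have hk1 : (0:ℝ) < (k:ℝ)+1 := by positivity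
    have : (0:ℝ) ≤ 1/((k:ℝ)+1) := by positivity
    nlinarith [hsum, sq_nonneg β]
  have hklog : β * Real.log (k:ℝ) ≤ β * Real.log ((k:ℝ)+2+c) := by
    apply mul_le_mul_of_nonneg_left _ (le_of_lt hβ)
    apply Real.log_le_log (by exact_mod_cast Nat.lt_of_lt_of_le Nat.zero_lt_one hk)
    linarith
  have hfinal : β * Real.log (k:ℝ) - β * Real.log (2+c) - β^2
      ≤ Real.log (∏ j ∈ Finset.range k, (1 + β/((j:ℝ)+2+c))) := by
    linarith
  calc Real.exp (-(β * Real.log (2+c) + β^2)) * (k:ℝ)^β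
      = Real.exp (β * Real.log (k:ℝ) - β * Real.log (2+c) - β^2) := by
        rw [Real.rpow_def_of_pos (by exact_mod_cast Nat.lt_of_lt_of_le Nat.zero_lt_one hk)]
        rw [← Real.exp_add]; ring_nf
    _ ≤ Real.exp (Real.log (∏ j ∈ Finset.range k, (1 + β/((j:ℝ)+2+c)))) :=
        Real.exp_le_exp.mpr hfinal
    _ = ∏ j ∈ Finset.range k, (1 + β/((j:ℝ)+2+c)) := Real.exp_log hprodpos

set_option maxHeartbeats 1000000 in
/-- Derivative bound for iterates of the parabolic inverse branch `ψ₀` of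
`T(x) = x + 2^α x^{1+α}` fixing `0`: on the fundamental interval `V₀ = (a₁, a₀]`,
`|Dψ₀^k(x)| ≤ C k^{-(1/α+1)}` for all `k ≥ 1`, where `a_n = ψ₀^n(a₀)`. -/
theorem stmt_18 (α : ℝ) (hα : α ∈ Set.Ioo (0 : ℝ) 1) (T ψ : ℝ → ℝ)
    (hT : ∀ x : ℝ, 0 ≤ x → T x = x + 2 ^ α * x ^ (1 + α))
    (a : ℕ → ℝ) (ha0 : a 0 ∈ Set.Ioc (0 : ℝ) 1) (hapos : ∀ n, 0 < a n)
    (han : ∀ n, a n = ψ^[n] (a 0))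
    (hψ0 : ψ 0 = 0)
    (hψ : ∀ x : ℝ, x ∈ Set.Icc 0 (a 0) → T (ψ x) = x ∧ 0 ≤ ψ x ∧ ψ x ≤ x) :
    ∃ C : ℝ, 0 < C ∧ ∀ k : ℕ, 1 ≤ k → ∀ x ∈ Set.Ioc (a 1) (a 0), ∀ d : ℝ,
      HasDerivAt (ψ^[k]) d x → |d| ≤ C * (k : ℝ) ^ (-(1 / α + 1)) := by
  obtain ⟨hα0, hα1⟩ := hα
  obtain ⟨ha0pos, ha01⟩ := ha0
  have h2α : (0:ℝ) < 2 ^ α := Real.rpow_pos_of_pos two_pos α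
  set P : ℝ := α * 2 ^ α with hP
  have hPpos : 0 < P := by positivity
  set β : ℝ := 1/α + 1 with hβdef
  have hβpos : 0 < β := by positivity
  set c : ℝ := (a 0) ^ (-α) / P with hc
  have hcpos : 0 < c := by
    have := Real.rpow_pos_of_pos ha0pos (-α); positivity
  -- convexity inequality
  have hconv : ∀ v u : ℝ, 0 ≤ v → v ≤ u →
      (1+α) * v^α * (u-v) ≤ u^(1+α) - v^(1+α) := by
    intro v u hv hvu
    rcases eq_or_lt_of_le hv with h0 | hvpos
    · rw [← h0, Real.zero_rpow (ne_of_gt hα0), Real.zero_rpow (by positivity)]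
      have := Real.rpow_nonneg (le_trans hv hvu) (1+α)
      simp only [mul_zero, zero_mul, sub_zero]
      linarith
    · set s : ℝ := (u - v)/v with hs
      have hspos : 0 ≤ s := div_nonneg (by linarith) (le_of_lt hvpos)
      have hb : 1 + (1+α)*s ≤ (1+s)^(1+α) :=
        one_add_mul_self_le_rpow_one_add (by linarith) (by linarith)
      have hus : u = v*(1+s) := by rw [hs]; field_simp; ring
      have hmul : u^(1+α) = v^(1+α) * (1+s)^(1+α) := by
        rw [hus, Real.mul_rpow (le_of_lt hvpos) (by linarith)]
      have hv1 : v^(1+α) = v * v^α := by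
        rw [Real.rpow_add hvpos, Real.rpow_one]
      have hvs : v^(1+α) * s = v^α * (u - v) := by
        rw [hv1, hs]; field_simp
      have hvpow : 0 < v^(1+α) := Real.rpow_pos_of_pos hvpos _
      nlinarith [mul_le_mul_of_nonneg_left hb (le_of_lt hvpow)]
  -- T strictly monotone on nonnegatives
  have hTmono : ∀ v u : ℝ, 0 ≤ v → v < u → T v < T u := by
    intro v u hv hvu
    rw [hT v hv, hT u (by linarith)]
    have h1 : v^(1+α) ≤ u^(1+α) :=
      Real.rpow_le_rpow hv (le_of_lt hvu) (by linarith)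
    nlinarith
  -- ψ monotone on [0, a 0]
  have hψmono : ∀ v u : ℝ, 0 ≤ v → v ≤ u → u ≤ a 0 → ψ v ≤ ψ u := by
    intro v u hv hvu hu
    obtain ⟨hTv, hv0, _⟩ := hψ v ⟨hv, le_trans hvu hu⟩
    obtain ⟨hTu, hu0, _⟩ := hψ u ⟨le_trans hv hvu, hu⟩
    by_contra h
    push_neg at h
    have := hTmono (ψ u) (ψ v) hu0 h
    rw [hTv, hTu] at this; linarith
  -- basic facts about a
  have hasucc : ∀ n, a (n+1) = ψ (a n) := by
    intro n
    rw [han (n+1), han n, Function.iterate_succ_apply']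
  have ha_le : ∀ n, a n ≤ a 0 := by
    intro n
    induction n with
    | zero => exact le_refl _
    | succ m ih =>
      have := (hψ (a m) ⟨le_of_lt (hapos m), ih⟩).2.2
      rw [hasucc m]; linarith
  have haT : ∀ n, a n = a (n+1) + 2^α * (a (n+1))^(1+α) := by
    intro n
    have h1 := (hψ (a n) ⟨le_of_lt (hapos n), ha_le n⟩).1
    rw [← hasucc n] at h1
    rw [← h1, hT _ (le_of_lt (hapos (n+1)))]
  -- quantitative lower bound on a n
  have hKa : ∀ n : ℕ, 1 ≤ ((a 0)^(-α) + P * n) * (a n)^α := by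
    intro n
    induction n with
    | zero =>
      have : (a 0)^(-α) * (a 0)^α = 1 := by
        rw [← Real.rpow_add ha0pos]; simp
      simp only [Nat.cast_zero, mul_zero, add_zero]
      linarith
    | succ m ih =>
      set s : ℝ := (a (m+1))^α with hsd
      have hspos : 0 < s := Real.rpow_pos_of_pos (hapos (m+1)) α
      set K : ℝ := (a 0)^(-α) + P * m with hK
      have hKpos : 0 < K := by
        have := Real.rpow_pos_of_pos ha0pos (-α)
        have : (0:ℝ) ≤ P * m := by positivity
        nlinarith [Real.rpow_pos_of_pos ha0pos (-α)]
      have hrec : a m = a (m+1) * (1 + 2^α * s) := by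
        have h1 : (a (m+1))^(1+α) = a (m+1) * s := by
          rw [hsd, Real.rpow_add (hapos (m+1)), Real.rpow_one]
        rw [haT m, h1]; ring
      have hampow : (a m)^α ≤ s * (1 + P * s) := by
        have h2 : (a m)^α = s * (1 + 2^α*s)^α := by
          rw [hrec, Real.mul_rpow (le_of_lt (hapos (m+1))) (by positivity)]
        have hss : (0:ℝ) ≤ 2^α*s := by positivity
        have h3 : (1 + 2^α*s)^α ≤ 1 + α*(2^α*s) :=
          rpow_one_add_le_one_add_mul_self (by linarith) (le_of_lt hα0)
            (le_of_lt hα1)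
        have h4 : α*(2^α*s) = P * s := by rw [hP]; ring
        rw [h2]
        calc s * (1 + 2^α*s)^α ≤ s * (1 + α*(2^α*s)) := by
              exact mul_le_mul_of_nonneg_left h3 (le_of_lt hspos)
          _ = s * (1 + P*s) := by rw [h4]
      have hgoal : 1 ≤ (K + P) * s := by
        by_contra h
        push_neg at h
        have h5 : 1 ≤ K * (a m)^α := ih
        have h6 : K * (a m)^α ≤ K * (s * (1 + P*s)) :=
          mul_le_mul_of_nonneg_left hampow (le_of_lt hKpos)
        have hPs : 0 < P*s := mul_pos hPpos hspos
        have hKs : K*s < 1 := by nlinarith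
        have he : K*(s*(1+P*s)) = K*s + (P*s)*(K*s) := by ring
        have h7 : (P*s)*(K*s) < (P*s)*1 := mul_lt_mul_of_pos_left hKs hPs
        nlinarith
      have : ((a 0)^(-α) + P * (m+1:ℕ)) = K + P := by
        rw [hK]; push_cast; ring
      rw [this]; exact hgoal
  -- iterate range facts
  have hiter : ∀ k : ℕ, ∀ x : ℝ, a 1 ≤ x → x ≤ a 0 →
      a (k+1) ≤ ψ^[k] x ∧ ψ^[k] x ≤ a k := by
    intro k
    induction k with
    | zero => intro x h1 h2; simpa using ⟨h1, h2⟩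
    | succ m ih =>
      intro x h1 h2
      obtain ⟨hl, hr⟩ := ih x h1 h2
      rw [Function.iterate_succ_apply']
      constructor
      · rw [hasucc (m+1)]
        exact hψmono (a (m+1)) (ψ^[m] x) (le_of_lt (hapos _)) hl
          (le_trans hr (ha_le m))
      · rw [hasucc m]
        exact hψmono (ψ^[m] x) (a m) (le_trans (le_of_lt (hapos _)) hl) hr
          (ha_le m)
  -- iterate monotonicity
  have hitermono : ∀ k : ℕ, ∀ y x : ℝ, 0 ≤ y → y ≤ x → x ≤ a 0 →
      ψ^[k] y ≤ ψ^[k] x := by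
    intro k
    induction k with
    | zero => intro y x _ h _; simpa using h
    | succ m ih =>
      intro y x hy hyx hx
      obtain ⟨_, hψy0, hψyy⟩ := hψ y ⟨hy, le_trans hyx hx⟩
      obtain ⟨_, hψx0, hψxx⟩ := hψ x ⟨le_trans hy hyx, hx⟩
      rw [Function.iterate_succ_apply, Function.iterate_succ_apply]
      exact ih (ψ y) (ψ x) hψy0 (hψmono y x hy hyx hx)
        (le_trans hψxx hx)
  -- key one-step contraction estimate
  have hstep : ∀ k : ℕ, ∀ v u : ℝ, a (k+1) ≤ v → v ≤ u → u ≤ a k →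
      (ψ u - ψ v) * (1 + β/((k:ℝ)+2+c)) ≤ u - v := by
    intro k v u hv hvu hu
    have hv0 : 0 ≤ v := le_trans (le_of_lt (hapos _)) hv
    have hua0 : u ≤ a 0 := le_trans hu (ha_le k)
    obtain ⟨hTv, hψv0, _⟩ := hψ v ⟨hv0, le_trans hvu hua0⟩
    obtain ⟨hTu, hψu0, _⟩ := hψ u ⟨le_trans hv0 hvu, hua0⟩
    have hψvu : ψ v ≤ ψ u := hψmono v u hv0 hvu hua0
    -- ψ v ≥ a (k+2)
    have hψvlb : a (k+2) ≤ ψ v := by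
      rw [hasucc (k+1)]
      exact hψmono (a (k+1)) v (le_of_lt (hapos _)) hv (le_trans hvu hua0)
    have hm : (0:ℝ) < (k:ℝ)+2+c := by positivity
    -- (1+α) 2^α (ψ v)^α ≥ β/(k+2+c)
    have hfac : β/((k:ℝ)+2+c) ≤ (1+α) * 2^α * (ψ v)^α := by
      have h1 := hKa (k+2)
      push_cast at h1
      have h2 : (a 0)^(-α) + P * ((k:ℝ)+2) = P * ((k:ℝ)+2+c) := by
        rw [hc]; field_simp; ring
      rw [h2] at h1
      have h3 : 1 ≤ P * ((k:ℝ)+2+c) * (a (k+2))^α := h1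
      have h4 : (a (k+2))^α ≤ (ψ v)^α :=
        Real.rpow_le_rpow (le_of_lt (hapos _)) hψvlb (le_of_lt hα0)
      have h5 : 1 ≤ P * ((k:ℝ)+2+c) * (ψ v)^α := by
        have := mul_le_mul_of_nonneg_left h4
          (by positivity : (0:ℝ) ≤ P * ((k:ℝ)+2+c))
        linarith
      rw [div_le_iff₀ hm]
      have h6 : (1+α) * 2^α * (ψ v)^α * ((k:ℝ)+2+c)
          = β * (P * ((k:ℝ)+2+c) * (ψ v)^α) := by
        rw [hβdef, hP]; field_simp
      rw [h6]
      nlinarith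
    -- main computation
    have hTdiff : u - v = (ψ u - ψ v) + 2^α * ((ψ u)^(1+α) - (ψ v)^(1+α)) := by
      conv_lhs => rw [← hTu, ← hTv]
      rw [hT _ hψu0, hT _ hψv0]; ring
    have hcv := hconv (ψ v) (ψ u) hψv0 hψvu
    have h7 : 2^α * ((1+α) * (ψ v)^α * (ψ u - ψ v))
        ≤ 2^α * ((ψ u)^(1+α) - (ψ v)^(1+α)) :=
      mul_le_mul_of_nonneg_left hcv (le_of_lt h2α)
    have h8 : (ψ u - ψ v) * (β/((k:ℝ)+2+c))
        ≤ (ψ u - ψ v) * ((1+α) * 2^α * (ψ v)^α) :=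
      mul_le_mul_of_nonneg_left hfac (by linarith)
    have h9 : (ψ u - ψ v) * ((1+α) * 2^α * (ψ v)^α)
        = 2^α * ((1+α) * (ψ v)^α * (ψ u - ψ v)) := by ring
    nlinarith [hTdiff, h7, h8, h9]
  -- product of contraction factors
  set D : ℕ → ℝ := fun k => ∏ j ∈ Finset.range k, (1 + β/((j:ℝ)+2+c)) with hD
  have hDpos : ∀ k, 0 < D k := by
    intro k
    exact Finset.prod_pos fun j _ => by positivity
  have hdiff : ∀ k : ℕ, ∀ y x : ℝ, a 1 ≤ y → y ≤ x → x ≤ a 0 →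
      D k * (ψ^[k] x - ψ^[k] y) ≤ x - y := by
    intro k
    induction k with
    | zero => intro y x _ _ _; simp [hD]
    | succ m ih =>
      intro y x h1 h2 h3
      have hy0 : 0 ≤ y := le_trans (le_of_lt (hapos 1)) h1
      set u : ℝ := ψ^[m] x with hu
      set v : ℝ := ψ^[m] y with hv
      have hxm := hiter m x (le_trans h1 h2) h3
      have hym := hiter m y h1 (le_trans h2 h3)
      have hvu : v ≤ u := hitermono m y x hy0 h2 h3
      have hs := hstep m v u hym.1 hvu hxm.2
      have hDm := hDpos m
      have hsucc : D (m+1) = D m * (1 + β/((m:ℝ)+2+c)) := by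
        rw [hD]; exact Finset.prod_range_succ _ m
      rw [hsucc, Function.iterate_succ_apply', Function.iterate_succ_apply',
        ← hu, ← hv]
      calc D m * (1 + β/((m:ℝ)+2+c)) * (ψ u - ψ v)
          = D m * ((ψ u - ψ v) * (1 + β/((m:ℝ)+2+c))) := by ring
        _ ≤ D m * (u - v) := mul_le_mul_of_nonneg_left hs (le_of_lt hDm)
        _ ≤ x - y := ih y x h1 h2 h3
  -- the constant
  refine ⟨Real.exp (β * Real.log (2+c) + β^2), Real.exp_pos _, ?_⟩
  intro k hk x hx d hd
  obtain ⟨hx1, hx2⟩ := hx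
  have hkpos : (0:ℝ) < (k:ℝ) := by exact_mod_cast Nat.lt_of_lt_of_le Nat.zero_lt_one hk
  -- slope bounds
  have hslope : ∀ y : ℝ, y ∈ Set.Ioo (a 1) x →
      slope (ψ^[k]) x y ∈ Set.Icc (0:ℝ) ((D k)⁻¹) := by
    intro y ⟨hy1, hy2⟩
    have hmono := hitermono k y x (le_trans (le_of_lt (hapos 1)) (le_of_lt hy1))
      (le_of_lt hy2) hx2
    have hdb := hdiff k y x (le_of_lt hy1) (le_of_lt hy2) hx2
    have hxy : 0 < x - y := by linarith
    have hsl : slope (ψ^[k]) x y = (ψ^[k] x - ψ^[k] y)/(x - y) := by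
      rw [slope_comm, slope_def_field]
    rw [hsl]
    constructor
    · apply div_nonneg (by linarith) (le_of_lt hxy)
    · rw [div_le_iff₀ hxy, inv_mul_eq_div, le_div_iff₀ (hDpos k)]
      linarith
  have htend : Filter.Tendsto (slope (ψ^[k]) x) (nhdsWithin x (Set.Iio x)) (nhds d) := by
    apply (hasDerivAt_iff_tendsto_slope.mp hd).mono_left
    apply nhdsWithin_mono
    intro y hy
    exact ne_of_lt hy
  have hev : ∀ᶠ y in nhdsWithin x (Set.Iio x),
      slope (ψ^[k]) x y ∈ Set.Icc (0:ℝ) ((D k)⁻¹) := by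
    filter_upwards [Ioo_mem_nhdsLT_of_mem (Set.mem_Ioc.mpr ⟨hx1, le_refl x⟩)]
      with y hy using hslope y hy
  have hdmem : d ∈ Set.Icc (0:ℝ) ((D k)⁻¹) :=
    isClosed_Icc.mem_of_tendsto htend hev
  have hDlb : Real.exp (-(β * Real.log (2+c) + β^2)) * (k:ℝ)^β ≤ D k :=
    aux_prod_lb hβpos (le_of_lt hcpos) hk
  have hεpos : 0 < Real.exp (-(β * Real.log (2+c) + β^2)) := Real.exp_pos _
  have hkβ : (0:ℝ) < (k:ℝ)^β := Real.rpow_pos_of_pos hkpos β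
  have habs : |d| = d := abs_of_nonneg hdmem.1
  rw [habs]
  have hrw : ((k:ℝ))^(-(1/α+1)) = ((k:ℝ)^β)⁻¹ := by
    rw [← hβdef, Real.rpow_neg (le_of_lt hkpos)]
  rw [hrw]
  have hDi : (D k)⁻¹ ≤ (Real.exp (-(β * Real.log (2+c) + β^2)) * (k:ℝ)^β)⁻¹ :=
    inv_anti₀ (by positivity) hDlb
  have he : (Real.exp (-(β * Real.log (2+c) + β^2)) * (k:ℝ)^β)⁻¹
      = Real.exp (β * Real.log (2+c) + β^2) * ((k:ℝ)^β)⁻¹ := by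
    rw [mul_inv, Real.exp_neg, inv_inv]
  calc d ≤ (D k)⁻¹ := hdmem.2
    _ ≤ _ := by rw [← he]; exact hDi
end
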